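/- arXiv:1410.1031 — 4 statements merged into one kernel-verified Lean document; each statement's English description precedes it below -/
import Mathlib

section
/- Let d, e be length-L complex sequences and x, y be length-N complex sequences, and set u = d ⊗ x and v = e ⊗ y (length-LN Kronecker sequences). Then for every shift τ = lN + n with 0 ≤ l ≤ L−1 and 0 ≤ n ≤ N−1, the periodic cross-correlation satisfies R_{u,v}(τ) = R_{d,e}(l) · C_{x,y}(n) + R_{d,e}(l+1) · C_{x,y}(n−N), where R_{u,v} is computed with indices modulo LN, R_{d,e} with indices modulo L, and C_{x,y}(n−N) is the aperiodic cross-correlation at the negative shift n−N (equal to 0 when n = 0). -/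
open Finset

/-- Periodic cross-correlation of two length-`M` complex sequences,
indices taken modulo `M`, defined for all integer shifts `τ`. -/
noncomputable def pcc (M : ℕ) (a b : ℕ → ℂ) (τ : ℤ) : ℂ :=
  ∑ n ∈ Finset.range M, a n * (starRingEnd ℂ) (b ((((n : ℤ) + τ) % (M : ℤ)).toNat))

/-- Aperiodic cross-correlation of two length-`M` complex sequences at integer shift `τ`. -/
noncomputable def acc (M : ℕ) (a b : ℕ → ℂ) (τ : ℤ) : ℂ :=
  if 0 ≤ τ then
    ∑ n ∈ Finset.range (M - τ.toNat), a n * (starRingEnd ℂ) (b (n + τ.toNat))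
  else
    ∑ n ∈ Finset.range (M - (-τ).toNat), a (n + (-τ).toNat) * (starRingEnd ℂ) (b n)

/-- Kronecker product of a length-`L` sequence `d` with a length-`N` sequence `x`:
`(d ⊗ x) (l*N + n) = d l * x n`. -/
def kron (N : ℕ) (d x : ℕ → ℂ) : ℕ → ℂ :=
  fun k => d (k / N) * x (k % N)

/-! Write each index of `range (L * N)` as `a * N + b` with `b < N`. Shifting by `l * N + n`
keeps it in block `a + l` when `b + n < N` and carries it into block `a + l + 1` otherwise; the
first kind of terms sum to `R_{d,e}(l) C_{x,y}(n)`, the second to `R_{d,e}(l+1) C_{x,y}(n - N)`. -/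

open ComplexConjugate

theorem pcc_natCast (M : ℕ) (a b : ℕ → ℂ) (τ : ℕ) :
    pcc M a b τ = ∑ k ∈ range M, a k * conj (b ((k + τ) % M)) := by
  refine sum_congr rfl fun k _ => ?_
  rw [← Nat.cast_add, ← Int.natCast_mod, Int.toNat_natCast]

theorem acc_natCast (N : ℕ) (x y : ℕ → ℂ) (n : ℕ) :
    acc N x y n = ∑ k ∈ range (N - n), x k * conj (y (k + n)) := by
  simp [acc]

theorem acc_natCast_sub {N n : ℕ} (x y : ℕ → ℂ) (hn : n < N) :
    acc N x y ((n : ℤ) - N) = ∑ k ∈ range n, x (k + (N - n)) * conj (y k) := by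
  rw [acc, if_neg (by omega), show (-((n : ℤ) - N)).toNat = N - n by omega,
    Nat.sub_sub_self hn.le]

theorem kron_mul_add {N t : ℕ} (f g : ℕ → ℂ) (s : ℕ) (ht : t < N) :
    kron N f g (s * N + t) = f s * g t := by
  have hN : 0 < N := by omega
  rw [kron, Nat.mul_comm s N, Nat.mul_add_div hN, Nat.div_eq_of_lt ht, Nat.add_zero,
    Nat.mul_add_mod, Nat.mod_eq_of_lt ht]

theorem kron_mul_add_mod {N t : ℕ} (L : ℕ) (f g : ℕ → ℂ) (s : ℕ) (ht : t < N) :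
    kron N f g ((s * N + t) % (L * N)) = f (s % L) * g t := by
  have hN : 0 < N := by omega
  have hmod : (s * N + t) % (L * N) = s % L * N + t := by
    rw [Nat.mul_comm L N, Nat.mod_mul, Nat.mul_add_mod_of_lt ht, Nat.mul_comm s N,
      Nat.mul_add_div hN, Nat.div_eq_of_lt ht, Nat.add_zero]
    ring
  rw [hmod, kron_mul_add f g _ ht]

theorem sum_range_mul_eq_sum_sum {M : Type*} [AddCommMonoid M] (f : ℕ → M) (L N : ℕ) :
    ∑ k ∈ range (L * N), f k = ∑ a ∈ range L, ∑ b ∈ range N, f (a * N + b) := by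
  induction L with
  | zero => simp
  | succ L ih => rw [Nat.succ_mul, sum_range_add, ih, sum_range_succ]

theorem sum_kron_block_shift {N n : ℕ} (L : ℕ) (d e x y : ℕ → ℂ) (a l : ℕ) (hn : n < N) :
    ∑ b ∈ range N, kron N d x (a * N + b) * conj (kron N e y ((a * N + b + (l * N + n)) % (L * N)))
      = d a * conj (e ((a + l) % L)) * ∑ k ∈ range (N - n), x k * conj (y (k + n))
        + d a * conj (e ((a + (l + 1)) % L)) * ∑ k ∈ range n, x (k + (N - n)) * conj (y k) := by
  rw [show range N = range (N - n + n) by rw [Nat.sub_add_cancel hn.le], sum_range_add,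
    mul_sum, mul_sum]
  congr 1
  · refine sum_congr rfl fun k hk => ?_
    have hkn : k + n < N := by rw [mem_range] at hk; omega
    rw [show a * N + k + (l * N + n) = (a + l) * N + (k + n) by ring,
      kron_mul_add d x a (by omega), kron_mul_add_mod L e y _ hkn, map_mul]
    ring
  · refine sum_congr rfl fun k hk => ?_
    have hk : k < n := mem_range.mp hk
    rw [show a * N + (N - n + k) + (l * N + n) = (a + (l + 1)) * N + k by
        zify [hn.le]; ring,
      kron_mul_add d x a (by omega), kron_mul_add_mod L e y _ (hk.trans hn), map_mul,
      Nat.add_comm k]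
    ring

theorem kronecker_periodic_cross_correlation_general
    (L N : ℕ) (d e x y : ℕ → ℂ) (l n : ℕ) (hn : n < N) :
    pcc (L * N) (kron N d x) (kron N e y) ((l : ℤ) * N + n) =
      pcc L d e l * acc N x y n + pcc L d e ((l : ℤ) + 1) * acc N x y ((n : ℤ) - N) := by
  rw [show (l : ℤ) * N + n = ((l * N + n : ℕ) : ℤ) by push_cast; ring, ← Nat.cast_succ,
    pcc_natCast, pcc_natCast, pcc_natCast, acc_natCast, acc_natCast_sub x y hn,
    sum_range_mul_eq_sum_sum, sum_mul, sum_mul, ← sum_add_distrib]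
  exact sum_congr rfl fun a _ => sum_kron_block_shift L d e x y a l hn

theorem kronecker_periodic_cross_correlation
    (L N : ℕ) (hL : 0 < L) (hN : 0 < N)
    (d e x y : ℕ → ℂ) (l n : ℕ) (hl : l < L) (hn : n < N) :
    pcc (L * N) (kron N d x) (kron N e y) ((l : ℤ) * N + n) =
      pcc L d e l * acc N x y n + pcc L d e ((l : ℤ) + 1) * acc N x y ((n : ℤ) - N) :=
  kronecker_periodic_cross_correlation_general L N d e x y l n hn
end

section
/- Let {a_1, …, a_K} be a (K, L, Z) ZCZ set of length-L complex sequences with Z ≥ 1, let b_1, …, b_K be arbitrary length-N complex sequences, and set c_i = a_i ⊗ b_i (length NL). Then for every pair i ≠ j and every integer shift τ with |τ| < N(Z−1), the periodic cross-correlation R_{c_i, c_j}(τ) = 0 (indices modulo NL). That is, {c_1, …, c_K} has a zero cross-correlation zone of width N(Z−1). -/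
open Finset

/-- `{a_1, …, a_K}` is a `(K, L, Z)` ZCZ sequence set: zero periodic autocorrelation
for `1 ≤ |τ| < Z` and zero periodic cross-correlation for `0 ≤ |τ| < Z`, `i ≠ j`. -/
def IsZCZ (K L Z : ℕ) (a : Fin K → ℕ → ℂ) : Prop :=
  (∀ i : Fin K, ∀ τ : ℤ, 1 ≤ τ.natAbs → τ.natAbs < Z → pcc L (a i) (a i) τ = 0) ∧
  (∀ i j : Fin K, i ≠ j → ∀ τ : ℤ, τ.natAbs < Z → pcc L (a i) (a j) τ = 0)

lemma sum_range_mul' (N L : ℕ) (f : ℕ → ℂ) :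
    ∑ k ∈ Finset.range (N*L), f k = ∑ l ∈ Finset.range L, ∑ n ∈ Finset.range N, f (N*l+n) := by
  induction L with
  | zero => simp
  | succ L ih =>
    rw [Nat.mul_succ, Finset.sum_range_succ, ← ih, Finset.range_eq_Ico,
      ← Finset.sum_Ico_consecutive f (Nat.zero_le (N*L)) (Nat.le_add_right _ N),
      Finset.sum_Ico_eq_sum_range, Finset.sum_Ico_eq_sum_range]
    simp [add_comm]

lemma idx_lemma (N L : ℕ) (hN : 0 < N) (hL : 0 < L) (x w s : ℤ)
    (hs0 : 0 ≤ s) (hsN : s < (N:ℤ)) (heq : x = N*w + s) :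
    (x % ((N*L : ℕ):ℤ)).toNat = N * ((w % (L:ℤ)).toNat) + s.toNat := by
  have hL' : (0:ℤ) < L := by exact_mod_cast hL
  have he0 : 0 ≤ w % L := Int.emod_nonneg w hL'.ne'
  have heL : w % L < L := Int.emod_lt_of_pos w hL'
  have hdm := Int.mul_ediv_add_emod w (L:ℤ)
  have key : x % ((N*L : ℕ):ℤ) = (N:ℤ) * (w % L) + s := by
    have hd : x = ((N:ℤ) * (w % L) + s) + ((N*L:ℕ):ℤ) * (w / L) := by
      push_cast
      linear_combination heq - (N:ℤ) * hdm
    rw [hd, Int.add_mul_emod_self_left]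
    apply Int.emod_eq_of_lt
    · positivity
    · push_cast
      nlinarith
  rw [key]
  have : (N:ℤ) * (w % L) + s = ((N * ((w % (L:ℤ)).toNat) + s.toNat : ℕ) : ℤ) := by
    push_cast [Int.toNat_of_nonneg he0, Int.toNat_of_nonneg hs0]
    ring
  rw [this, Int.toNat_natCast]

lemma inner_zero (N L : ℕ) (hN : 0 < N) (hL : 0 < L)
    (ai aj bi bj : ℕ → ℂ) (τ q' : ℤ) (n sn : ℕ) (hn : n < N) (hsn : sn < N)
    (hpcc : pcc L ai aj q' = 0)
    (heq : ∀ l : ℕ, ((N*l+n : ℕ) : ℤ) + τ = (N:ℤ)*((l:ℤ)+q') + (sn:ℤ)) :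
    ∑ l ∈ Finset.range L, kron N ai bi (N*l+n) *
      (starRingEnd ℂ) (kron N aj bj ((((N*l+n : ℕ):ℤ) + τ) % ((N*L:ℕ):ℤ)).toNat) = 0 := by
  have hstep : ∀ l ∈ Finset.range L,
      kron N ai bi (N*l+n) *
        (starRingEnd ℂ) (kron N aj bj ((((N*l+n : ℕ):ℤ) + τ) % ((N*L:ℕ):ℤ)).toNat)
      = (bi n * (starRingEnd ℂ) (bj sn)) *
        (ai l * (starRingEnd ℂ) (aj ((((l:ℤ) + q') % (L:ℤ)).toNat))) := by
    intro l _
    have hidx := idx_lemma N L hN hL (((N*l+n : ℕ):ℤ) + τ) ((l:ℤ)+q') (sn:ℤ)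
      (by positivity) (by exact_mod_cast hsn) (heq l)
    rw [hidx]
    have h1 : (N*l+n) / N = l := by
      rw [Nat.mul_add_div hN, Nat.div_eq_of_lt hn, add_zero]
    have h2 : (N*l+n) % N = n := by
      rw [Nat.mul_add_mod, Nat.mod_eq_of_lt hn]
    have h3 : (N * (((l:ℤ) + q') % (L:ℤ)).toNat + (sn:ℤ).toNat) / N
        = (((l:ℤ) + q') % (L:ℤ)).toNat := by
      rw [Int.toNat_natCast, Nat.mul_add_div hN, Nat.div_eq_of_lt hsn, add_zero]
    have h4 : (N * (((l:ℤ) + q') % (L:ℤ)).toNat + (sn:ℤ).toNat) % N = sn := by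
      rw [Int.toNat_natCast, Nat.mul_add_mod, Nat.mod_eq_of_lt hsn]
    simp only [kron, h1, h2, h3, h4, map_mul]
    ring
  rw [Finset.sum_congr rfl hstep, ← Finset.mul_sum]
  have : ∑ l ∈ Finset.range L, ai l * (starRingEnd ℂ) (aj ((((l:ℤ) + q') % (L:ℤ)).toNat))
      = pcc L ai aj q' := rfl
  rw [this, hpcc, mul_zero]

theorem quasiZCZ_zero_cross_correlation_zone
    (K L N Z : ℕ) (hL : 0 < L) (hN : 0 < N) (hZ : 1 ≤ Z)
    (a : Fin K → ℕ → ℂ) (hA : IsZCZ K L Z a)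
    (b : Fin K → ℕ → ℂ)
    (c : Fin K → ℕ → ℂ) (hc : ∀ i, c i = kron N (a i) (b i))
    (i j : Fin K) (hij : i ≠ j)
    (τ : ℤ) (hτ : τ.natAbs < N * (Z - 1)) :
    pcc (N * L) (c i) (c j) τ = 0 := by
  have hN' : (0:ℤ) < N := by exact_mod_cast hN
  set q := τ / (N:ℤ) with hqdef
  set r := τ % (N:ℤ) with hrdef
  have hdm : (N:ℤ) * q + r = τ := Int.mul_ediv_add_emod τ (N:ℤ)
  have hr0 : 0 ≤ r := Int.emod_nonneg τ hN'.ne'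
  have hrN : r < N := Int.emod_lt_of_pos τ hN'
  have hrtn : ((r.toNat : ℕ) : ℤ) = r := Int.toNat_of_nonneg hr0
  -- bounds on q
  set zc := Z - 1 with hzc
  have hτub : τ < (N:ℤ) * (zc:ℤ) ∧ -((N:ℤ) * (zc:ℤ)) < τ := by
    have h1 : τ.natAbs < N * zc := hτ
    constructor <;> [skip; skip] <;> omega
  have hq_ub : q < (zc:ℤ) := by
    have hub : (N:ℤ)*q < (N:ℤ)*(zc:ℤ) := by linarith [hτub.1]
    exact lt_of_mul_lt_mul_left hub hN'.le
  have hq_lb : -((zc:ℤ)) < q + 1 := by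
    have hlb : (N:ℤ)*(-(zc:ℤ)) < (N:ℤ)*(q+1) := by nlinarith [hτub.2]
    exact lt_of_mul_lt_mul_left hlb hN'.le
  have hqZ : q.natAbs < Z := by omega
  have hq1Z : (q+1).natAbs < Z := by omega
  rw [hc i, hc j]
  unfold pcc
  rw [sum_range_mul', Finset.sum_comm]
  apply Finset.sum_eq_zero
  intro n hn
  have hn' : n < N := Finset.mem_range.mp hn
  rcases lt_or_ge (n + r.toNat) N with hcase | hcase
  · exact inner_zero N L hN hL (a i) (a j) (b i) (b j) τ q n (n + r.toNat) hn' hcase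
      (hA.2 i j hij q hqZ)
      (fun l => by push_cast [hrtn]; linear_combination -hdm)
  · have hsn : n + r.toNat - N < N := by omega
    have hsn' : ((n + r.toNat - N : ℕ) : ℤ) = (n:ℤ) + r - N := by omega
    exact inner_zero N L hN hL (a i) (a j) (b i) (b j) τ (q+1) n (n + r.toNat - N) hn' hsn
      (hA.2 i j hij (q+1) hq1Z)
      (fun l => by push_cast [hsn']; linear_combination -hdm)
end

section
/- Let {a_1, …, a_K} be a (K, L, Z) ZCZ set of length-L complex sequences, let b_i be a length-N complex sequence, and set c_i = a_i ⊗ b_i (length NL). Then for every integer shift τ with N ≤ |τ| < N(Z−1), the periodic autocorrelation of c_i satisfies R_{c_i}(τ) = 0 (indices modulo NL). -/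
open Finset

lemma sum_range_mul_eq (N L : ℕ) (f : ℕ → ℂ) :
    ∑ k ∈ Finset.range (N * L), f k =
    ∑ l ∈ Finset.range L, ∑ n ∈ Finset.range N, f (l * N + n) := by
  rw [← Finset.sum_product']
  apply Finset.sum_nbij' (i := fun k => (k / N, k % N)) (j := fun p => p.1 * N + p.2)
  · intro k hk
    simp only [Finset.mem_range] at hk
    have hN : 0 < N := by
      rcases Nat.eq_zero_or_pos N with h | h
      · subst h; simp at hk
      · exact h
    simp only [Finset.mem_product, Finset.mem_range]
    exact ⟨Nat.div_lt_of_lt_mul (by omega), Nat.mod_lt _ hN⟩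
  · intro p hp
    simp only [Finset.mem_product, Finset.mem_range] at hp
    simp only [Finset.mem_range]
    calc p.1 * N + p.2 < p.1 * N + N := by omega
    _ ≤ N * L := by nlinarith [hp.1, hp.2]
  · intro k _; exact Nat.div_add_mod' k N
  · intro p hp
    simp only [Finset.mem_product, Finset.mem_range] at hp
    have h2 := hp.2
    ext
    · simp [Nat.add_mul_div_right, Nat.div_eq_of_lt h2, Nat.mul_div_cancel, mul_comm,
        Nat.mul_add_div (by omega : 0 < N)]
    · show (p.1 * N + p.2) % N = p.2
      rw [mul_comm, Nat.mul_add_mod, Nat.mod_eq_of_lt h2]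
  · intro k _
    show f k = f (k / N * N + k % N)
    rw [Nat.div_add_mod']

lemma int_mod_fact (N L : ℕ) (hN : 0 < N) (hL : 0 < L) (m s : ℤ) (hs0 : 0 ≤ s) (hsN : s < N) :
    (m * N + s) % ((N : ℤ) * L) = (m % L) * N + s := by
  have key : m * N + s = ((m % L) * N + s) + (N * L) * (m / L) := by
    have := Int.emod_add_mul_ediv m L
    nlinarith [this]
  rw [key, Int.add_mul_emod_self_left]
  apply Int.emod_eq_of_lt
  · have : 0 ≤ m % L := Int.emod_nonneg m (by positivity)
    positivity
  · have h1 : m % L ≤ L - 1 := by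
      have := Int.emod_lt_of_pos m (by exact_mod_cast hL : (0:ℤ) < L); omega
    nlinarith

lemma toNat_form (N : ℕ) (m : ℤ) (hm : 0 ≤ m) (s : ℕ) :
    (m * N + (s : ℤ)).toNat = m.toNat * N + s := by
  have : m * N + (s:ℤ) = ((m.toNat * N + s : ℕ) : ℤ) := by
    push_cast [Int.toNat_of_nonneg hm]; ring
  rw [this, Int.toNat_natCast]

lemma kron_apply (N : ℕ) (hN : 0 < N) (d x : ℕ → ℂ) (m s : ℕ) (hs : s < N) :
    kron N d x (m * N + s) = d m * x s := by
  unfold kron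
  rw [mul_comm m N, Nat.mul_add_div hN, Nat.mul_add_mod, Nat.div_eq_of_lt hs,
    Nat.mod_eq_of_lt hs, add_zero]

lemma kron_pcc (N L : ℕ) (hN : 0 < N) (hL : 0 < L) (d x : ℕ → ℂ) (τ : ℤ) :
    pcc (N * L) (kron N d x) (kron N d x) τ =
      (∑ n ∈ Finset.range (N - (τ % N).toNat),
          x n * (starRingEnd ℂ) (x (n + (τ % N).toNat))) * pcc L d d (τ / (N : ℤ))
      + (∑ n ∈ Finset.Ico (N - (τ % N).toNat) N,
          x n * (starRingEnd ℂ) (x (n + (τ % N).toNat - N))) * pcc L d d (τ / (N : ℤ) + 1) := by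
  set q : ℤ := τ / (N : ℤ) with hq
  set r : ℕ := (τ % N).toNat with hrdef
  have hNZ : (0:ℤ) < N := by exact_mod_cast hN
  have hr0 : (0:ℤ) ≤ τ % N := Int.emod_nonneg τ (by omega)
  have hrN : τ % (N:ℤ) < N := Int.emod_lt_of_pos τ hNZ
  have hrcast : (r : ℤ) = τ % N := Int.toNat_of_nonneg hr0
  have hrltN : r < N := by omega
  have hτ : τ = q * N + r := by
    rw [hrcast, hq, mul_comm]; exact (Int.mul_ediv_add_emod τ N).symm
  unfold pcc
  rw [sum_range_mul_eq]
  simp only [Nat.cast_mul]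
  have main : ∀ l ∈ Finset.range L,
      (∑ n ∈ Finset.range N, kron N d x (l * N + n) *
        (starRingEnd ℂ) (kron N d x ((((l * N + n : ℕ) : ℤ) + τ) % ((N:ℤ) * L)).toNat))
      = (∑ n ∈ Finset.range (N - r), x n * (starRingEnd ℂ) (x (n + r))) *
          (d l * (starRingEnd ℂ) (d ((((l:ℤ) + q) % L).toNat)))
        + (∑ n ∈ Finset.Ico (N - r) N, x n * (starRingEnd ℂ) (x (n + r - N))) *
          (d l * (starRingEnd ℂ) (d ((((l:ℤ) + q + 1) % L).toNat))) := by
    intro l hl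
    rw [Finset.range_eq_Ico,
      ← Finset.sum_Ico_consecutive _ (Nat.zero_le (N - r)) (Nat.sub_le N r)]
    congr 1
    · rw [← Finset.range_eq_Ico, Finset.sum_mul]
      refine Finset.sum_congr rfl fun n hn => ?_
      rw [Finset.mem_range] at hn
      have hnN : n < N := by omega
      have hsum : n + r < N := by omega
      have e1 : ((l * N + n : ℕ) : ℤ) + τ = ((l:ℤ) + q) * N + ((n + r : ℕ) : ℤ) := by
        rw [hτ]; push_cast; ring
      have e2 : (((l * N + n : ℕ) : ℤ) + τ) % ((N:ℤ) * L)
          = (((l:ℤ) + q) % L) * N + ((n + r : ℕ) : ℤ) := by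
        rw [e1]
        exact int_mod_fact N L hN hL _ _ (by positivity) (by exact_mod_cast hsum)
      rw [e2, toNat_form N _ (Int.emod_nonneg _ (by positivity)) (n + r),
        kron_apply N hN d x _ _ hsum, kron_apply N hN d x l n hnN, map_mul]
      ring
    · rw [Finset.sum_mul]
      refine Finset.sum_congr rfl fun n hn => ?_
      rw [Finset.mem_Ico] at hn
      have hnN : n < N := hn.2
      have hge : N ≤ n + r := by omega
      have hsum : n + r - N < N := by omega
      have e1 : ((l * N + n : ℕ) : ℤ) + τ = ((l:ℤ) + q + 1) * N + ((n + r - N : ℕ) : ℤ) := by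
        rw [hτ]; push_cast [hge]; ring
      have e2 : (((l * N + n : ℕ) : ℤ) + τ) % ((N:ℤ) * L)
          = (((l:ℤ) + q + 1) % L) * N + ((n + r - N : ℕ) : ℤ) := by
        rw [e1]
        exact int_mod_fact N L hN hL _ _ (by positivity) (by exact_mod_cast hsum)
      rw [e2, toNat_form N _ (Int.emod_nonneg _ (by positivity)) (n + r - N),
        kron_apply N hN d x _ _ hsum, kron_apply N hN d x l n hnN, map_mul]
      ring
  rw [Finset.sum_congr rfl main, Finset.sum_add_distrib, ← Finset.mul_sum, ← Finset.mul_sum]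
  simp only [add_assoc]

theorem quasiZCZ_autocorrelation_zero_zone
    (K L N Z : ℕ) (hL : 0 < L) (hN : 0 < N)
    (a : Fin K → ℕ → ℂ) (hA : IsZCZ K L Z a)
    (b : Fin K → ℕ → ℂ)
    (c : Fin K → ℕ → ℂ) (hc : ∀ i, c i = kron N (a i) (b i))
    (i : Fin K) (τ : ℤ) (hτ₁ : N ≤ τ.natAbs) (hτ₂ : τ.natAbs < N * (Z - 1)) :
    pcc (N * L) (c i) (c i) τ = 0 := by
  obtain ⟨hauto, -⟩ := hA
  rw [hc i, kron_pcc N L hN hL]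
  set q : ℤ := τ / (N : ℤ) with hq
  set r : ℕ := (τ % N).toNat with hrdef
  set W : ℕ := Z - 1 with hWdef
  have hW2 : 2 ≤ W := by
    have h1 : N * 1 < N * W := by
      rw [mul_one]; exact lt_of_le_of_lt hτ₁ hτ₂
    have := Nat.lt_of_mul_lt_mul_left h1
    omega
  have hZW : Z = W + 1 := by omega
  have hNZ : (0:ℤ) < N := by exact_mod_cast hN
  have hr0 : (0:ℤ) ≤ τ % N := Int.emod_nonneg τ (by omega)
  have hrN : τ % (N:ℤ) < N := Int.emod_lt_of_pos τ hNZ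
  have hrcast : (r : ℤ) = τ % N := Int.toNat_of_nonneg hr0
  have hrltN : r < N := by omega
  have hτ : τ = q * N + r := by
    rw [hrcast, hq, mul_comm]; exact (Int.mul_ediv_add_emod τ N).symm
  have hT1 : (N:ℤ) ≤ (τ.natAbs : ℤ) := by exact_mod_cast hτ₁
  have hT2 : (τ.natAbs : ℤ) < (N:ℤ) * (W:ℤ) := by exact_mod_cast hτ₂
  rcases le_or_gt 0 τ with hpos | hneg
  · -- τ ≥ 0
    have habs : (τ.natAbs : ℤ) = τ := Int.natAbs_of_nonneg hpos
    rw [habs] at hT1 hT2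
    have hq1 : 1 ≤ q := by nlinarith [hτ, hT1, hrltN, hrcast, hr0]
    have hq2 : q ≤ (W:ℤ) - 1 := by nlinarith [hτ, hT2, hr0]
    have h1 : pcc L (a i) (a i) q = 0 := hauto i q (by omega) (by omega)
    have h2 : pcc L (a i) (a i) (q + 1) = 0 := hauto i (q + 1) (by omega) (by omega)
    rw [h1, h2, mul_zero, mul_zero, add_zero]
  · -- τ < 0
    have habs : (τ.natAbs : ℤ) = -τ := Int.ofNat_natAbs_of_nonpos (le_of_lt hneg)
    rw [habs] at hT1 hT2
    have hq1 : q ≤ -1 := by nlinarith [hτ, hT1, hr0]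
    have hq2 : -(W:ℤ) ≤ q := by nlinarith [hτ, hT2, hrltN]
    have h1 : pcc L (a i) (a i) q = 0 := hauto i q (by omega) (by omega)
    rw [h1, mul_zero, zero_add]
    rcases Nat.eq_zero_or_pos r with hr | hr
    · rw [hr]
      simp
    · have hq3 : q ≤ -2 := by nlinarith [hτ, hT1]
      have h2 : pcc L (a i) (a i) (q + 1) = 0 := hauto i (q + 1) (by omega) (by omega)
      rw [h2, mul_zero]
end

section
/- Let b ∈ ℂ^N with Σ_{n=0}^{N−1} |b_n|² = N, let z = [b; 0_N] ∈ ℂ^{2N} be its zero-padding, and let Z = F_{2N} z be the unitary 2N-point DFT of z. Then the aperiodic autocorrelation sidelobes of b all vanish, i.e., C_b(τ) = 0 for every 1 ≤ τ ≤ N−1, if and only if |Z_k| = 1/√2 for every 0 ≤ k ≤ 2N−1. -/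
open Finset

/-- Unitary `N`-point DFT: `(F_N x) k = (1/√N) Σ_n x n · exp(−2πi·k·n/N)`. -/
noncomputable def dft (N : ℕ) (x : ℕ → ℂ) : ℕ → ℂ :=
  fun k => (1 / (Real.sqrt N : ℂ)) *
    ∑ n ∈ Finset.range N, x n * Complex.exp (-(2 * Real.pi * Complex.I * k * n) / N)

/-!
Padding `b` with `N` zeros turns its aperiodic autocorrelation into the cyclic autocorrelation
`r` of the padded sequence on `ℤ/2Nℤ`: no shift wraps a nonzero entry around, so
`r τ = conj (C_b τ)` and `r (-τ) = C_b τ` for `0 ≤ τ < N`, while `r N = 0`.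
By Wiener–Khinchin the DFT of `r` is the power spectrum `|𝓕 z|²`, and the DFT of `r 0 • δ₀` is the
constant `r 0 = ‖b‖²`. Injectivity of the DFT therefore makes the spectrum flat exactly when all
sidelobes vanish; the normalisation `‖b‖² = N` and the factor `1/√(2N)` put the flat value at
`|Z_k|² = 1/2`.
-/

open ComplexConjugate
open scoped ZMod

lemma Finset.sum_range_eq_sum_range_of_le {M : Type*} [AddCommMonoid M] {f g : ℕ → M} {m n : ℕ}
    (hmn : m ≤ n) (hfg : ∀ i < m, f i = g i) (hf : ∀ i, m ≤ i → i < n → f i = 0) :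
    ∑ i ∈ range n, f i = ∑ i ∈ range m, g i := by
  rw [← sum_subset (range_subset_range.2 hmn) fun i hi hi' => hf i (by simpa using hi')
    (mem_range.1 hi)]
  exact sum_congr rfl fun i hi => hfg i (mem_range.1 hi)

namespace ZMod

variable {M : ℕ} [NeZero M]

lemma sum_eq_sum_range_natCast {E : Type*} [AddCommMonoid E] (f : ZMod M → E) :
    ∑ j, f j = ∑ n ∈ range M, f n :=
  sum_nbij' val Nat.cast (fun j _ => mem_range.2 j.val_lt) (fun _ _ => mem_univ _)
    (fun j _ => natCast_zmod_val j) (fun _ hn => val_cast_of_lt (mem_range.1 hn))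
    (fun j _ => by rw [natCast_zmod_val])

noncomputable def cyclicAutocorr (Φ : ZMod M → ℂ) (t : ZMod M) : ℂ :=
  ∑ j, conj (Φ j) * Φ (j + t)

lemma cyclicAutocorr_neg (Φ : ZMod M → ℂ) (t : ZMod M) :
    cyclicAutocorr Φ (-t) = conj (cyclicAutocorr Φ t) := by
  rw [cyclicAutocorr, cyclicAutocorr, map_sum, ← _root_.Equiv.sum_comp (Equiv.addRight t)]
  simp [mul_comm]

lemma cyclicAutocorr_zero (Φ : ZMod M → ℂ) :
    cyclicAutocorr Φ 0 = ((∑ j, ‖Φ j‖ ^ 2 : ℝ) : ℂ) := by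
  simp [cyclicAutocorr, Complex.conj_mul']

lemma dft_cyclicAutocorr (Φ : ZMod M → ℂ) (k : ZMod M) :
    𝓕 (cyclicAutocorr Φ) k = (‖𝓕 Φ k‖ ^ 2 : ℝ) := by
  rw [Complex.ofReal_pow, ← Complex.conj_mul', dft_apply, dft_apply, map_sum, sum_mul_sum]
  simp_rw [cyclicAutocorr, smul_eq_mul, mul_sum]
  rw [sum_comm]
  refine sum_congr rfl fun j _ => ?_
  rw [← _root_.Equiv.sum_comp (Equiv.subRight j)]
  refine sum_congr rfl fun s _ => ?_
  have harg : -((s - j) * k) = j * k + -(s * k) := by ring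
  simp only [Equiv.subRight_apply, add_sub_cancel, harg, AddChar.map_add_eq_mul, map_mul,
    AddChar.map_neg_eq_conj (x := j * k), Complex.conj_conj]
  ring

lemma dft_single_zero (c : ℂ) : 𝓕 (Pi.single 0 c : ZMod M → ℂ) = fun _ => c := by
  ext k
  simp [dft_apply, Pi.single_apply]

lemma norm_dft_sq_eq_iff_cyclicAutocorr_eq_zero (Φ : ZMod M → ℂ) :
    (∀ k, ‖𝓕 Φ k‖ ^ 2 = ∑ j, ‖Φ j‖ ^ 2) ↔ ∀ t ≠ 0, cyclicAutocorr Φ t = 0 := by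
  have hsingle : (∀ t ≠ 0, cyclicAutocorr Φ t = 0) ↔
      cyclicAutocorr Φ = Pi.single 0 (cyclicAutocorr Φ 0) := by
    refine ⟨fun h => funext fun t => ?_, fun h t ht => by rw [h, Pi.single_eq_of_ne ht]⟩
    by_cases ht : t = 0
    · rw [ht, Pi.single_eq_same]
    · rw [h t ht, Pi.single_eq_of_ne ht]
  rw [hsingle, ← dft.injective.eq_iff, dft_single_zero, funext_iff, cyclicAutocorr_zero]
  simp only [dft_cyclicAutocorr, Complex.ofReal_inj]

lemma exists_natCast_eq_or_neg_eq_of_ne_zero {t : ZMod M} (ht : t ≠ 0) :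
    ∃ τ : ℕ, 1 ≤ τ ∧ τ ≤ M / 2 ∧ ((τ : ZMod M) = t ∨ (τ : ZMod M) = -t) := by
  refine ⟨t.valMinAbs.natAbs, ?_, natAbs_valMinAbs_le t, ?_⟩
  · simpa [Nat.one_le_iff_ne_zero] using ht
  · rw [natCast_natAbs_valMinAbs]
    split_ifs <;> simp

end ZMod

lemma dft_eq_inv_sqrt_mul_zmod_dft (M : ℕ) [NeZero M] (x : ℕ → ℂ) (k : ℕ) :
    dft M x k = (Real.sqrt M : ℂ)⁻¹ * 𝓕 (fun j : ZMod M => x j.val) k := by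
  rw [dft, one_div, ZMod.dft_apply, ZMod.sum_eq_sum_range_natCast]
  refine congrArg _ (sum_congr rfl fun n hn => ?_)
  have harg : -((n : ZMod M) * k) = ((-(n * k : ℤ) : ℤ) : ZMod M) := by push_cast; ring
  rw [ZMod.val_cast_of_lt (mem_range.1 hn), harg, ZMod.stdAddChar_coe, smul_eq_mul, mul_comm]
  congr 2
  push_cast
  ring

lemma norm_dft_eq_norm_zmod_dft_div_sqrt (M : ℕ) [NeZero M] (x : ℕ → ℂ) (k : ℕ) :
    ‖dft M x k‖ = ‖𝓕 (fun j : ZMod M => x j.val) k‖ / Real.sqrt M := by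
  rw [dft_eq_inv_sqrt_mul_zmod_dft, norm_mul, norm_inv, Complex.norm_real,
    Real.norm_of_nonneg (Real.sqrt_nonneg _), inv_mul_eq_div]

noncomputable def zeroPad (N : ℕ) (b : ℕ → ℂ) : ZMod (2 * N) → ℂ :=
  fun j => if j.val < N then b j.val else 0

lemma zeroPad_natCast (N : ℕ) (b : ℕ → ℂ) {n : ℕ} (hn : n < 2 * N) :
    zeroPad N b n = if n < N then b n else 0 := by
  rw [zeroPad, ZMod.val_cast_of_lt hn]

lemma sum_norm_sq_zeroPad (N : ℕ) [NeZero N] (b : ℕ → ℂ) :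
    ∑ j, ‖zeroPad N b j‖ ^ 2 = ∑ n ∈ range N, ‖b n‖ ^ 2 := by
  rw [ZMod.sum_eq_sum_range_natCast]
  refine Finset.sum_range_eq_sum_range_of_le (by omega) (fun n hn => ?_) (fun n hn hn' => ?_)
  · rw [zeroPad_natCast N b (by omega), if_pos hn]
  · rw [zeroPad_natCast N b hn', if_neg (by omega), norm_zero, sq, zero_mul]

lemma cyclicAutocorr_zeroPad_natCast (N : ℕ) [NeZero N] (b : ℕ → ℂ) {τ : ℕ} (hτ : τ ≤ N) :
    ZMod.cyclicAutocorr (zeroPad N b) τ = conj (acc N b b τ) := by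
  have hacc : conj (acc N b b τ) = ∑ n ∈ range (N - τ), conj (b n) * b (n + τ) := by
    simp [acc, mul_comm]
  rw [hacc, ZMod.cyclicAutocorr, ZMod.sum_eq_sum_range_natCast]
  refine Finset.sum_range_eq_sum_range_of_le (by omega) (fun n hn => ?_) (fun n hn hn' => ?_)
  · rw [← Nat.cast_add, zeroPad_natCast N b (by omega), zeroPad_natCast N b (by omega),
      if_pos (by omega), if_pos (by omega)]
  · rw [← Nat.cast_add, zeroPad_natCast N b hn']
    by_cases hnN : n < N
    · rw [zeroPad_natCast N b (show n + τ < 2 * N by omega), if_neg (show ¬n + τ < N by omega),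
        mul_zero]
    · rw [if_neg hnN, map_zero, zero_mul]

lemma cyclicAutocorr_zeroPad_eq_zero_iff (N : ℕ) [NeZero N] (b : ℕ → ℂ) :
    (∀ t ≠ 0, ZMod.cyclicAutocorr (zeroPad N b) t = 0) ↔
      ∀ τ : ℕ, 1 ≤ τ → τ ≤ N - 1 → acc N b b τ = 0 := by
  constructor
  · intro h τ hτ1 hτN
    have hτ0 : (τ : ZMod (2 * N)) ≠ 0 := by
      rw [Ne, ← ZMod.val_eq_zero, ZMod.val_cast_of_lt (by omega)]
      omega
    simpa [cyclicAutocorr_zeroPad_natCast N b (by omega : τ ≤ N)] using h τ hτ0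
  · intro h t ht
    obtain ⟨τ, hτ1, hτN, hτt⟩ := ZMod.exists_natCast_eq_or_neg_eq_of_ne_zero ht
    rw [Nat.mul_div_cancel_left N two_pos] at hτN
    have hacc : acc N b b τ = 0 := by
      rcases Nat.lt_or_ge τ N with hlt | hge
      · exact h τ hτ1 (by omega)
      · simp [acc, show N - τ = 0 by omega]
    have hτ : ZMod.cyclicAutocorr (zeroPad N b) τ = 0 := by
      rw [cyclicAutocorr_zeroPad_natCast N b hτN, hacc, map_zero]
    rcases hτt with rfl | hneg
    · exact hτ
    · rw [← neg_neg t, ← hneg, ZMod.cyclicAutocorr_neg, hτ, map_zero]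

lemma div_sqrt_two_mul_eq_inv_sqrt_two_iff {a : ℝ} (ha : 0 ≤ a) {N : ℕ} (hN : 0 < N) :
    a / Real.sqrt (2 * N : ℕ) = 1 / Real.sqrt 2 ↔ a ^ 2 = N := by
  have h2 : Real.sqrt 2 ≠ 0 := by positivity
  rw [div_eq_div_iff (by positivity) h2, one_mul, Nat.cast_mul, Nat.cast_ofNat,
    Real.sqrt_mul zero_le_two, mul_comm, mul_right_inj' h2, eq_comm,
    Real.sqrt_eq_iff_eq_sq (Nat.cast_nonneg N) ha, eq_comm]

theorem can_criterion_zero_sidelobes_iff_flat_padded_spectrum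
    (N : ℕ) (hN : 0 < N) (b : ℕ → ℂ)
    (hb : ∑ n ∈ Finset.range N, ‖b n‖ ^ 2 = (N : ℝ))
    (z : ℕ → ℂ) (hz : z = fun n => if n < N then b n else 0)
    (Z : ℕ → ℂ) (hZ : Z = dft (2 * N) z) :
    (∀ τ : ℕ, 1 ≤ τ → τ ≤ N - 1 → acc N b b (τ : ℤ) = 0) ↔
    (∀ k < 2 * N, ‖Z k‖ = 1 / Real.sqrt 2) := by
  subst hz hZ
  have : NeZero N := ⟨hN.ne'⟩
  rw [← cyclicAutocorr_zeroPad_eq_zero_iff, ← ZMod.norm_dft_sq_eq_iff_cyclicAutocorr_eq_zero,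
    sum_norm_sq_zeroPad, hb]
  simp only [norm_dft_eq_norm_zmod_dft_div_sqrt,
    div_sqrt_two_mul_eq_inv_sqrt_two_iff (norm_nonneg _) hN]
  refine ⟨fun h k _ => h k, fun h k => ?_⟩
  have hk := h k.val (ZMod.val_lt k)
  rwa [ZMod.natCast_zmod_val] at hk
end
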